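/- Let $X$ be a separable Hilbert space with Borel probability measure $\nu$, with Sobolev spaces $W^{1,p}(X,\nu)$ as the domain of the closure $M_p$ of $R\nabla$ on $C^1_b(X)$. Then for every $\varphi \in W^{1,p}(X,\nu)$, the positive part $\varphi_+$, the negative part $\varphi_-$ and $|\varphi|$ belong to $W^{1,p}(X,\nu)$, and $M_p(\varphi_+) = \mathbb{1}_{\{\varphi>0\}} M_p\varphi$, $M_p(\varphi_-) = -\mathbb{1}_{\{\varphi<0\}} M_p\varphi$, $M_p(|\varphi|) = (\mathrm{sign}\,\varphi)\, M_p\varphi$. In particular, $M_p\varphi$ vanishes $\nu$-a.e. on each level set $\varphi^{-1}(c)$, $c \in \mathbb{R}$. -/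

import Mathlib

/-!
Chain rule: if `F ∈ C¹(ℝ)` has bounded continuous derivative `D`, then `(F ∘ φ, D(φ) • G)` is a
Sobolev pair. Approximate `φ` by `fₙ ∈ C¹_b` with `R∇fₙ → G`; along a subsequence `fₙ → φ` a.e.,
so `D(fₙ) • R∇fₙ → D(φ) • G` by dominated convergence. Since the graph of `M_p` is closed, the
chain rule passes to limits `F_k → F` uniformly with `F_k' → D` pointwise (`D` need not be `F'`).
Smoothing `t₊` by `t₊² / (t₊ + ε)`, this covers `F(t) = a t₊ + b t₋ + m t` with
`D = a 1_{t>0} - b 1_{t<0} + m`. For `φ - c` and `F = t₊ - t₋ - t = 0` this gives the pair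
`(0, -1_{φ=c} G)`, which closability forces to vanish.
-/

open MeasureTheory Filter
open scoped ENNReal Topology RealInnerProductSpace

noncomputable section

variable {X : Type*} [NormedAddCommGroup X] [InnerProductSpace ℝ X] [CompleteSpace X]
  [MeasurableSpace X] [BorelSpace X]

/-- `f ∈ C¹_b(X)`: bounded, continuously Fréchet differentiable, with bounded gradient. -/
def C1b (f : X → ℝ) : Prop :=
  ContDiff ℝ 1 f ∧ (∃ C, ∀ x, |f x| ≤ C) ∧ (∃ C, ∀ x, ‖gradient f x‖ ≤ C)

/-- `f ∈ W^{1,p}(X,ν)` with `M_p f = G`, where `M_p` is the closure of `R∇` defined on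
`C¹_b(X)`. -/
def IsSobolevPair (R : X →L[ℝ] X) (ν : Measure X) (p : ℝ≥0∞)
    (f : X → ℝ) (G : X → X) : Prop :=
  MemLp f p ν ∧ MemLp G p ν ∧
    ∃ fn : ℕ → X → ℝ, (∀ n, C1b (fn n)) ∧
      Tendsto (fun n => eLpNorm (fun x => fn n x - f x) p ν) atTop (𝓝 0) ∧
      Tendsto (fun n => eLpNorm (fun x => R (gradient (fn n) x) - G x) p ν) atTop (𝓝 0)

section LpSeminorm

variable {α E : Type*} [MeasurableSpace α] {μ : Measure α} [NormedAddCommGroup E] {p : ℝ≥0∞}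

-- Gradients of `C¹_b` functions need not be a.e. strongly measurable (`X` is not assumed
-- separable), so the triangle inequality is needed with only one measurable summand.
theorem eLpNorm_add_le_of_aestronglyMeasurable_right {f g : α → E}
    (hg : AEStronglyMeasurable g μ) (hp : 1 ≤ p) :
    eLpNorm (f + g) p μ ≤ eLpNorm f p μ + eLpNorm g p μ := by
  rcases eq_or_ne p ∞ with rfl | hp'
  · simpa only [eLpNorm_exponent_top] using eLpNormEssSup_add_le
  have hp0 : p ≠ 0 := (zero_lt_one.trans_le hp).ne'
  set q := p.toReal
  have hq : 1 ≤ q := by simpa using ENNReal.toReal_mono hp' hp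
  have hq0 : 0 < q := zero_lt_one.trans_le hq
  simp only [eLpNorm_eq_lintegral_rpow_enorm_toReal hp0 hp']
  -- The lower integral of `‖f + g‖ₑ ^ q` is attained by a measurable minorant `h`; then
  -- `h ^ (1 / q) - ‖g‖ₑ` is a measurable minorant of `‖f‖ₑ`, and Minkowski applies to it.
  obtain ⟨h, hh, hh_le, hh_eq⟩ := exists_measurable_le_lintegral_eq μ fun x => ‖(f + g) x‖ₑ ^ q
  set u : α → ℝ≥0∞ := fun x => h x ^ (1 / q) - ‖g x‖ₑ
  have hu : ∀ x, u x ≤ ‖f x‖ₑ := fun x => by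
    refine tsub_le_iff_right.2 ((?_ : h x ^ (1 / q) ≤ ‖f x + g x‖ₑ).trans (enorm_add_le _ _))
    calc h x ^ (1 / q) ≤ (‖f x + g x‖ₑ ^ q) ^ (1 / q) :=
          ENNReal.rpow_le_rpow (hh_le x) (by positivity)
      _ = ‖f x + g x‖ₑ := by rw [one_div, ENNReal.rpow_rpow_inv hq0.ne']
  have hu_meas : AEMeasurable u μ := (hh.pow_const _).aemeasurable.sub hg.enorm
  calc (∫⁻ x, ‖(f + g) x‖ₑ ^ q ∂μ) ^ (1 / q) = (∫⁻ x, (h x ^ (1 / q)) ^ q ∂μ) ^ (1 / q) := by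
        rw [hh_eq]; simp_rw [one_div, ENNReal.rpow_inv_rpow hq0.ne']
    _ ≤ (∫⁻ x, (u + fun x => ‖g x‖ₑ) x ^ q ∂μ) ^ (1 / q) := by
        gcongr with x; exact le_tsub_add
    _ ≤ (∫⁻ x, u x ^ q ∂μ) ^ (1 / q) + (∫⁻ x, ‖g x‖ₑ ^ q ∂μ) ^ (1 / q) :=
        ENNReal.lintegral_Lp_add_le hu_meas hg.enorm hq
    _ ≤ (∫⁻ x, ‖f x‖ₑ ^ q ∂μ) ^ (1 / q) + (∫⁻ x, ‖g x‖ₑ ^ q ∂μ) ^ (1 / q) := by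
        gcongr with x; exact hu x

theorem eLpNorm_sub_le_eLpNorm_sub_add {f g h : α → E}
    (hgh : AEStronglyMeasurable (fun x => g x - h x) μ) (hp : 1 ≤ p) :
    eLpNorm (fun x => f x - h x) p μ ≤
      eLpNorm (fun x => f x - g x) p μ + eLpNorm (fun x => g x - h x) p μ := by
  have hsum : ((fun x => f x - g x) + fun x => g x - h x) = fun x => f x - h x := by
    ext x; simp
  rw [← hsum]
  exact eLpNorm_add_le_of_aestronglyMeasurable_right hgh hp

theorem MemLp.of_eLpNorm_sub_lt_top {f g : α → E} (hg : MemLp g p μ)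
    (hf : AEStronglyMeasurable f μ) (h : eLpNorm (fun x => g x - f x) p μ < ∞) : MemLp f p μ := by
  simpa using hg.sub ⟨hg.1.sub hf, h⟩

theorem MemLp.comp_of_abs_sub_le [IsFiniteMeasure μ] {φ : α → ℝ} (hφ : MemLp φ p μ) {F : ℝ → ℝ}
    (hF : Continuous F) {L : ℝ} (hFL : ∀ a b, |F a - F b| ≤ L * |a - b|) :
    MemLp (fun x => F (φ x)) p μ := by
  refine ((memLp_const |F 0|).add (hφ.norm.const_mul L)).of_le
    (hF.comp_aestronglyMeasurable hφ.1) (Eventually.of_forall fun x => ?_)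
  have hL : 0 ≤ L := by simpa using (abs_nonneg _).trans (hFL 1 0)
  have hFx := hFL (φ x) 0
  simp only [Pi.add_apply, Real.norm_eq_abs, sub_zero] at hFx ⊢
  rw [abs_of_nonneg (add_nonneg (abs_nonneg _) (mul_nonneg hL (abs_nonneg _)))]
  linarith [abs_sub_abs_le_abs_sub (F (φ x)) (F 0)]

theorem tendsto_eLpNorm_smul_of_tendsto_ae [NormedSpace ℝ E] (hp : p ≠ ∞) {G : α → E}
    (hG : MemLp G p μ) {a : ℕ → α → ℝ} (ha : ∀ k, AEStronglyMeasurable (a k) μ) {M : ℝ}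
    (hM : ∀ k x, |a k x| ≤ M) (hlim : ∀ᵐ x ∂μ, Tendsto (fun k => a k x) atTop (𝓝 0)) :
    Tendsto (fun k => eLpNorm (fun x => a k x • G x) p μ) atTop (𝓝 0) := by
  rcases eq_or_ne p 0 with rfl | hp0
  · simp
  have hq : 0 < p.toReal := ENNReal.toReal_pos hp0 hp
  simp only [eLpNorm_eq_lintegral_rpow_enorm_toReal hp0 hp]
  rw [← ENNReal.zero_rpow_of_pos (one_div_pos.2 hq)]
  refine (ENNReal.continuous_rpow_const.tendsto 0).comp ?_
  have hdom := tendsto_lintegral_of_dominated_convergence' (f := 0)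
    (F := fun k x => ‖a k x • G x‖ₑ ^ p.toReal) (fun x => ‖M • G x‖ₑ ^ p.toReal)
    (fun k => (((ha k).smul hG.1).enorm.pow_const _))
    (fun k => Eventually.of_forall fun x => ?_)
    (lintegral_rpow_enorm_lt_top_of_eLpNorm_lt_top hp0 hp (hG.const_smul M).2).ne ?_
  · simpa using hdom
  · dsimp only
    gcongr
    rw [enorm_smul, enorm_smul]
    gcongr
    exact enorm_le_iff_norm_le.2 ((hM k x).trans (le_abs_self M))
  · filter_upwards [hlim] with x hx
    have : Tendsto (fun k => ‖a k x‖ₑ * ‖G x‖ₑ) atTop (𝓝 (‖(0 : ℝ)‖ₑ * ‖G x‖ₑ)) :=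
      ENNReal.Tendsto.mul_const (continuous_enorm.tendsto 0 |>.comp hx) (Or.inr enorm_ne_top)
    simpa [Function.comp_def, enorm_smul, ENNReal.zero_rpow_of_pos hq] using
      (ENNReal.continuous_rpow_const (y := p.toReal) |>.tendsto _).comp this

theorem tendsto_eLpNorm_of_norm_le [IsFiniteMeasure μ] {f : ℕ → α → E} {c : ℕ → ℝ}
    (hf : ∀ k x, ‖f k x‖ ≤ c k) (hc : Tendsto c atTop (𝓝 0)) :
    Tendsto (fun k => eLpNorm (f k) p μ) atTop (𝓝 0) := by
  have hbound : Tendsto (fun k => μ Set.univ ^ p.toReal⁻¹ * ENNReal.ofReal (c k)) atTop (𝓝 0) := by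
    simpa using ENNReal.Tendsto.const_mul (ENNReal.tendsto_ofReal hc)
      (Or.inr (by finiteness))
  exact tendsto_of_tendsto_of_tendsto_of_le_of_le tendsto_const_nhds hbound (fun _ => zero_le)
    fun k => eLpNorm_le_of_ae_bound (Eventually.of_forall (hf k))

end LpSeminorm

theorem abs_sub_le_mul_abs_sub_of_hasDerivAt {F D : ℝ → ℝ} (hF : ∀ t, HasDerivAt F (D t) t)
    {L : ℝ} (hDL : ∀ t, |D t| ≤ L) (a b : ℝ) : |F a - F b| ≤ L * |a - b| :=
  convex_univ.norm_image_sub_le_of_norm_hasDerivWithin_le (fun t _ => (hF t).hasDerivWithinAt)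
    (fun t _ => hDL t) (Set.mem_univ b) (Set.mem_univ a)

theorem hasDerivAt_comp_max_zero {g g' : ℝ → ℝ} (hg : ∀ s, 0 ≤ s → HasDerivAt g (g' s) s)
    (hg'0 : g' 0 = 0) (t : ℝ) : HasDerivAt (fun t => g (max t 0)) (g' (max t 0)) t := by
  rcases lt_trichotomy t 0 with ht | rfl | ht
  · rw [max_eq_right ht.le, hg'0]
    refine (hasDerivAt_const t (g 0)).congr_of_eventuallyEq ?_
    filter_upwards [Iio_mem_nhds ht] with s hs
    rw [max_eq_right (le_of_lt hs)]
  · rw [max_self, hg'0]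
    have hleft : HasDerivWithinAt (fun t => g (max t 0)) 0 (Set.Iic 0) 0 :=
      (hasDerivWithinAt_const 0 _ (g 0)).congr (fun s hs => by rw [max_eq_right hs]) (by simp)
    have hright : HasDerivWithinAt (fun t => g (max t 0)) 0 (Set.Ici 0) 0 := by
      have h := (hg 0 le_rfl).hasDerivWithinAt (s := Set.Ici 0)
      rw [hg'0] at h
      exact h.congr (fun s (hs : 0 ≤ s) => by rw [max_eq_left hs]) (by simp)
    simpa [Set.Iic_union_Ici] using hleft.union hright
  · rw [max_eq_left ht.le]
    refine (hg t ht.le).congr_of_eventuallyEq ?_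
    filter_upwards [Ioi_mem_nhds ht] with s hs
    rw [max_eq_left (le_of_lt hs)]

section SmoothPosPart

-- This is `t₊ ^ 2 / (t₊ + ε)`, written so that its derivative is visibly
-- `1 - ε ^ 2 / (t₊ + ε) ^ 2`.
def smoothPosPart (ε t : ℝ) : ℝ := max t 0 + ε ^ 2 / (max t 0 + ε) - ε

def smoothPosPartDeriv (ε t : ℝ) : ℝ := 1 - ε ^ 2 / (max t 0 + ε) ^ 2

variable {ε : ℝ}

theorem hasDerivAt_smoothPosPart (hε : 0 < ε) (t : ℝ) :
    HasDerivAt (smoothPosPart ε) (smoothPosPartDeriv ε t) t := by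
  refine hasDerivAt_comp_max_zero (g := fun s => s + ε ^ 2 / (s + ε) - ε)
    (g' := fun s => 1 - ε ^ 2 / (s + ε) ^ 2) (fun s hs => ?_) (by field_simp; ring) t
  have hne : s + ε ≠ 0 := by positivity
  refine (((hasDerivAt_id' s).fun_add ((hasDerivAt_const s (ε ^ 2)).fun_div
    ((hasDerivAt_id' s).add_const ε) hne)).sub_const ε).congr_deriv ?_
  field_simp
  ring

theorem continuous_smoothPosPartDeriv (hε : 0 < ε) : Continuous (smoothPosPartDeriv ε) := by
  have hpos : ∀ t : ℝ, (max t 0 + ε) ^ 2 ≠ 0 := fun t => by positivity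
  unfold smoothPosPartDeriv
  fun_prop (disch := exact hpos _)

theorem abs_smoothPosPartDeriv_le_one (hε : 0 < ε) (t : ℝ) : |smoothPosPartDeriv ε t| ≤ 1 := by
  have h0 : 0 ≤ max t 0 := le_max_right t 0
  have h1 : ε ^ 2 / (max t 0 + ε) ^ 2 ≤ 1 :=
    (div_le_one (by positivity)).2 (pow_le_pow_left₀ hε.le (by linarith) 2)
  rw [smoothPosPartDeriv, abs_le]
  constructor <;> nlinarith [div_nonneg (sq_nonneg ε) (sq_nonneg (max t 0 + ε))]

theorem abs_smoothPosPart_sub_le (hε : 0 < ε) (t : ℝ) : |smoothPosPart ε t - max t 0| ≤ ε := by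
  have h0 : 0 ≤ max t 0 := le_max_right t 0
  have h1 : ε ^ 2 / (max t 0 + ε) ≤ ε := by
    rw [div_le_iff₀ (by positivity)]; nlinarith
  rw [smoothPosPart, abs_le]
  constructor <;> nlinarith [div_nonneg (sq_nonneg ε) (by positivity : 0 ≤ max t 0 + ε)]

theorem tendsto_smoothPosPartDeriv (t : ℝ) :
    Tendsto (fun ε => smoothPosPartDeriv ε t) (𝓝[>] 0) (𝓝 (if 0 < t then 1 else 0)) := by
  split_ifs with ht
  · have hcont : ContinuousAt (fun ε : ℝ => 1 - ε ^ 2 / (t + ε) ^ 2) 0 := by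
      fun_prop (disch := simp [ht.ne'])
    simpa [smoothPosPartDeriv, max_eq_left ht.le, ht.ne'] using hcont.tendsto.mono_left
      nhdsWithin_le_nhds
  · refine tendsto_const_nhds.congr' ?_
    filter_upwards [self_mem_nhdsWithin] with ε (hε : 0 < ε)
    simp [smoothPosPartDeriv, max_eq_right (not_lt.1 ht), hε.ne']

end SmoothPosPart

section C1b

variable {H : Type*} [NormedAddCommGroup H] [InnerProductSpace ℝ H] [CompleteSpace H]

theorem HasDerivAt.comp_hasGradientAt {f : H → ℝ} {g x : H} {F : ℝ → ℝ} {d : ℝ}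
    (hF : HasDerivAt F d (f x)) (hf : HasGradientAt f g x) :
    HasGradientAt (fun y => F (f y)) (d • g) x := by
  rw [hasGradientAt_iff_hasFDerivAt, map_smul]
  exact hF.comp_hasFDerivAt x (hasGradientAt_iff_hasFDerivAt.1 hf)

variable {f : H → ℝ} {F D : ℝ → ℝ}

theorem C1b.gradient_comp (hf : C1b f) (hF : ∀ t, HasDerivAt F (D t) t) (x : H) :
    gradient (fun y => F (f y)) x = D (f x) • gradient f x :=
  ((hF (f x)).comp_hasGradientAt ((hf.1.differentiable one_ne_zero x).hasGradientAt)).gradient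

theorem C1b.comp (hf : C1b f) (hF : ∀ t, HasDerivAt F (D t) t) (hD : Continuous D) {L : ℝ}
    (hDL : ∀ t, |D t| ≤ L) : C1b (fun x => F (f x)) := by
  obtain ⟨hf1, ⟨C, hC⟩, ⟨C', hC'⟩⟩ := hf
  have hF1 : ContDiff ℝ 1 F := contDiff_one_iff_deriv.2
    ⟨fun t => (hF t).differentiableAt, by rwa [funext fun t => (hF t).deriv]⟩
  refine ⟨hF1.comp hf1, ⟨|F 0| + L * C, fun x => ?_⟩, ⟨L * C', fun x => ?_⟩⟩
  · have := abs_sub_le_mul_abs_sub_of_hasDerivAt hF hDL (f x) 0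
    have hL : 0 ≤ L := (abs_nonneg _).trans (hDL 0)
    rw [sub_zero] at this
    nlinarith [abs_sub_abs_le_abs_sub (F (f x)) (F 0), hC x]
  · rw [C1b.gradient_comp ⟨hf1, ⟨C, hC⟩, ⟨C', hC'⟩⟩ hF, norm_smul, Real.norm_eq_abs]
    exact mul_le_mul (hDL _) (hC' x) (norm_nonneg _) ((abs_nonneg _).trans (hDL 0))

end C1b

section Sobolev

variable {H : Type*} [NormedAddCommGroup H] [InnerProductSpace ℝ H] [CompleteSpace H]
  [MeasurableSpace H] {R : H →L[ℝ] H} {ν : Measure H} {p : ℝ≥0∞} {φ : H → ℝ} {G : H → H}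

theorem isSobolevPair_iff : IsSobolevPair R ν p φ G ↔ MemLp φ p ν ∧ MemLp G p ν ∧
    ∀ ε : ℝ≥0∞, 0 < ε → ∃ g, C1b g ∧ eLpNorm (fun x => g x - φ x) p ν < ε ∧
      eLpNorm (fun x => R (gradient g x) - G x) p ν < ε := by
  refine and_congr_right fun _ => and_congr_right fun _ => ⟨?_, fun h => ?_⟩
  · rintro ⟨fn, hfn, hfφ, hfG⟩ ε hε
    obtain ⟨n, hnφ, hnG⟩ := ((hfφ.eventually_lt_const hε).and (hfG.eventually_lt_const hε)).exists
    exact ⟨fn n, hfn n, hnφ, hnG⟩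
  · choose g hg hgφ hgG using fun n : ℕ =>
      h (n : ℝ≥0∞)⁻¹ (ENNReal.inv_pos.2 (ENNReal.natCast_ne_top n))
    have squeeze {u : ℕ → ℝ≥0∞} (hu : ∀ n, u n < (n : ℝ≥0∞)⁻¹) : Tendsto u atTop (𝓝 0) :=
      tendsto_of_tendsto_of_tendsto_of_le_of_le tendsto_const_nhds
        ENNReal.tendsto_inv_nat_nhds_zero (fun _ => zero_le) fun n => (hu n).le
    exact ⟨g, hg, squeeze hgφ, squeeze hgG⟩

namespace IsSobolevPair

theorem congr (h : IsSobolevPair R ν p φ G) {φ' : H → ℝ} {G' : H → H} (hφ : ∀ x, φ x = φ' x)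
    (hG : ∀ x, G x = G' x) : IsSobolevPair R ν p φ' G' := by
  obtain rfl : φ = φ' := funext hφ
  obtain rfl : G = G' := funext hG
  exact h

theorem of_tendsto {ι : Type*} {l : Filter ι} [l.NeBot] (hp : 1 ≤ p) {φs : ι → H → ℝ}
    {Gs : ι → H → H} (h : ∀ i, IsSobolevPair R ν p (φs i) (Gs i))
    (hφ : AEStronglyMeasurable φ ν) (hG : AEStronglyMeasurable G ν)
    (hφs : Tendsto (fun i => eLpNorm (fun x => φs i x - φ x) p ν) l (𝓝 0))
    (hGs : Tendsto (fun i => eLpNorm (fun x => Gs i x - G x) p ν) l (𝓝 0)) :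
    IsSobolevPair R ν p φ G := by
  obtain ⟨i₀, hφi₀, hGi₀⟩ := ((hφs.eventually_lt_const ENNReal.zero_lt_top).and
    (hGs.eventually_lt_const ENNReal.zero_lt_top)).exists
  refine isSobolevPair_iff.2 ⟨MemLp.of_eLpNorm_sub_lt_top (h i₀).1 hφ hφi₀,
    MemLp.of_eLpNorm_sub_lt_top (h i₀).2.1 hG hGi₀, fun ε hε => ?_⟩
  have hε2 : 0 < ε / 2 := ENNReal.half_pos hε.ne'
  obtain ⟨i, hφi, hGi⟩ := ((hφs.eventually_lt_const hε2).and (hGs.eventually_lt_const hε2)).exists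
  obtain ⟨hφi_mem, hGi_mem, happrox⟩ := isSobolevPair_iff.1 (h i)
  obtain ⟨g, hg, hgφ, hgG⟩ := happrox _ hε2
  refine ⟨g, hg, ?_, ?_⟩
  · calc _ ≤ _ := eLpNorm_sub_le_eLpNorm_sub_add (hφi_mem.1.sub hφ) hp
      _ < ε / 2 + ε / 2 := ENNReal.add_lt_add hgφ hφi
      _ = ε := ENNReal.add_halves ε
  · calc _ ≤ _ := eLpNorm_sub_le_eLpNorm_sub_add (hGi_mem.1.sub hG) hp
      _ < ε / 2 + ε / 2 := ENNReal.add_lt_add hgG hGi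
      _ = ε := ENNReal.add_halves ε

theorem exists_seq_tendsto_ae [BorelSpace H] (hp0 : p ≠ 0) (hp' : p ≠ ∞)
    (hφ : IsSobolevPair R ν p φ G) :
    ∃ fn : ℕ → H → ℝ, (∀ n, C1b (fn n)) ∧
      Tendsto (fun n => eLpNorm (fun x => fn n x - φ x) p ν) atTop (𝓝 0) ∧
      Tendsto (fun n => eLpNorm (fun x => R (gradient (fn n) x) - G x) p ν) atTop (𝓝 0) ∧
      ∀ᵐ x ∂ν, Tendsto (fun n => fn n x) atTop (𝓝 (φ x)) := by
  obtain ⟨hφp, -, fn, hfn, hfφ, hfG⟩ := hφ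
  obtain ⟨ns, hns, hae⟩ := (tendstoInMeasure_of_tendsto_eLpNorm_of_ne_top hp0 hp'
    (fun n => (hfn n).1.continuous.aestronglyMeasurable) hφp.1 hfφ).exists_seq_tendsto_ae
  exact ⟨fun m => fn (ns m), fun m => hfn (ns m), hfφ.comp hns.tendsto_atTop,
    hfG.comp hns.tendsto_atTop, hae⟩

theorem comp [BorelSpace H] [IsFiniteMeasure ν] (hp : 1 ≤ p) (hp' : p ≠ ∞)
    (hφ : IsSobolevPair R ν p φ G) {F D : ℝ → ℝ} (hF : ∀ t, HasDerivAt F (D t) t)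
    (hD : Continuous D) {L : ℝ} (hDL : ∀ t, |D t| ≤ L) :
    IsSobolevPair R ν p (fun x => F (φ x)) (fun x => D (φ x) • G x) := by
  obtain ⟨fn, hfn, hfφ, hfG, hae⟩ := hφ.exists_seq_tendsto_ae (zero_lt_one.trans_le hp).ne' hp'
  have hLip := abs_sub_le_mul_abs_sub_of_hasDerivAt hF hDL
  have hDφ : AEStronglyMeasurable (fun x => D (φ x)) ν := hD.comp_aestronglyMeasurable hφ.1.1
  have hDG : MemLp (fun x => D (φ x) • G x) p ν := by
    refine (hφ.2.1.const_smul L).of_le (hDφ.smul hφ.2.1.1) (Eventually.of_forall fun x => ?_)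
    simp only [Pi.smul_apply, norm_smul, Real.norm_eq_abs]
    exact mul_le_mul_of_nonneg_right ((hDL _).trans (le_abs_self L)) (norm_nonneg _)
  refine ⟨MemLp.comp_of_abs_sub_le hφ.1
    (continuous_iff_continuousAt.2 fun t => (hF t).continuousAt) hLip, hDG,
    fun n x => F (fn n x), fun n => (hfn n).comp hF hD hDL, ?_, ?_⟩
  · refine tendsto_of_tendsto_of_tendsto_of_le_of_le tendsto_const_nhds ?_ (fun _ => zero_le)
      fun n => eLpNorm_le_mul_eLpNorm_of_ae_le_mul (g := fun x => fn n x - φ x)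
        (Eventually.of_forall fun x => hLip (fn n x) (φ x)) p
    simpa using ENNReal.Tendsto.const_mul hfφ (Or.inr ENNReal.ofReal_ne_top)
  have hsplit n x : R (gradient (fun y => F (fn n y)) x) - D (φ x) • G x =
      D (fn n x) • (R (gradient (fn n) x) - G x) + (D (fn n x) - D (φ x)) • G x := by
    rw [(hfn n).gradient_comp hF, map_smul, smul_sub, sub_smul]
    abel
  have hDfn_meas n : AEStronglyMeasurable (fun x => D (fn n x) - D (φ x)) ν :=
    (hD.comp_aestronglyMeasurable (hfn n).1.continuous.aestronglyMeasurable).sub hDφ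
  have hdiff : Tendsto (fun n => eLpNorm (fun x => (D (fn n x) - D (φ x)) • G x) p ν)
      atTop (𝓝 0) := by
    refine tendsto_eLpNorm_smul_of_tendsto_ae hp' hφ.2.1 hDfn_meas (M := 2 * L)
      (fun n x => ?_) ?_
    · linarith [abs_sub (D (fn n x)) (D (φ x)), hDL (fn n x), hDL (φ x)]
    · filter_upwards [hae] with x hx
      simpa using ((hD.tendsto _).comp hx).sub_const (D (φ x))
  refine tendsto_of_tendsto_of_tendsto_of_le_of_le tendsto_const_nhds
    (h := fun n => ENNReal.ofReal L * eLpNorm (fun x => R (gradient (fn n) x) - G x) p ν +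
      eLpNorm (fun x => (D (fn n x) - D (φ x)) • G x) p ν)
    ?_ (fun _ => zero_le) fun n => ?_
  · simpa using (ENNReal.Tendsto.const_mul hfG (Or.inr ENNReal.ofReal_ne_top)).add hdiff
  simp only [hsplit]
  refine (eLpNorm_add_le_of_aestronglyMeasurable_right ((hDfn_meas n).smul hφ.2.1.1) hp).trans
    (add_le_add_left (eLpNorm_le_mul_eLpNorm_of_ae_le_mul (Eventually.of_forall fun x => ?_) p) _)
  rw [norm_smul, Real.norm_eq_abs]
  exact mul_le_mul_of_nonneg_right (hDL _) (norm_nonneg _)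

theorem comp_of_tendsto [BorelSpace H] [IsFiniteMeasure ν] (hp : 1 ≤ p) (hp' : p ≠ ∞)
    (hφ : IsSobolevPair R ν p φ G) {F D : ℕ → ℝ → ℝ} {F₀ D₀ : ℝ → ℝ} {L : ℝ} {c : ℕ → ℝ}
    (hF : ∀ k t, HasDerivAt (F k) (D k t) t) (hD : ∀ k, Continuous (D k))
    (hDL : ∀ k t, |D k t| ≤ L) (hFF₀ : ∀ k t, |F k t - F₀ t| ≤ c k)
    (hc : Tendsto c atTop (𝓝 0)) (hDD₀ : ∀ t, Tendsto (fun k => D k t) atTop (𝓝 (D₀ t))) :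
    IsSobolevPair R ν p (fun x => F₀ (φ x)) (fun x => D₀ (φ x) • G x) := by
  have hFF₀' : ∀ t, Tendsto (fun k => F k t) atTop (𝓝 (F₀ t)) := fun t =>
    tendsto_iff_norm_sub_tendsto_zero.2
      (squeeze_zero (fun _ => norm_nonneg _) (fun k => hFF₀ k t) hc)
  have hF₀ : Measurable F₀ := measurable_of_tendsto_metrizable
    (fun k => (continuous_iff_continuousAt.2 fun t => (hF k t).continuousAt).measurable)
    (tendsto_pi_nhds.2 hFF₀')
  have hD₀ : Measurable D₀ :=
    measurable_of_tendsto_metrizable (fun k => (hD k).measurable) (tendsto_pi_nhds.2 hDD₀)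
  have hD₀L t : |D₀ t| ≤ L := le_of_tendsto' ((continuous_abs.tendsto _).comp (hDD₀ t)) (hDL · t)
  have hD₀φ : AEStronglyMeasurable (fun x => D₀ (φ x)) ν :=
    (hD₀.comp_aemeasurable hφ.1.1.aemeasurable).aestronglyMeasurable
  refine of_tendsto hp (fun k => hφ.comp hp hp' (hF k) (hD k) (hDL k))
    (hF₀.comp_aemeasurable hφ.1.1.aemeasurable).aestronglyMeasurable (hD₀φ.smul hφ.2.1.1)
    (tendsto_eLpNorm_of_norm_le (fun k x => hFF₀ k (φ x)) hc) ?_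
  simp only [← sub_smul]
  refine tendsto_eLpNorm_smul_of_tendsto_ae hp' hφ.2.1
    (fun k => ((hD k).comp_aestronglyMeasurable hφ.1.1).sub hD₀φ) (M := 2 * L)
    (fun k x => ?_) (Eventually.of_forall fun x => ?_)
  · linarith [abs_sub (D k (φ x)) (D₀ (φ x)), hDL k (φ x), hD₀L (φ x)]
  · simpa using (hDD₀ (φ x)).sub_const (D₀ (φ x))

theorem comp_piecewiseLinear [BorelSpace H] [IsFiniteMeasure ν] (hp : 1 ≤ p) (hp' : p ≠ ∞)
    (hφ : IsSobolevPair R ν p φ G) (a b m : ℝ) :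
    IsSobolevPair R ν p (fun x => a * max (φ x) 0 + b * max (-φ x) 0 + m * φ x)
      (fun x => (a * (if 0 < φ x then 1 else 0) - b * (if φ x < 0 then 1 else 0) + m) • G x) := by
  set ε : ℕ → ℝ := fun k => 1 / ((k : ℝ) + 1)
  have hε k : 0 < ε k := by positivity
  have hε0 : Tendsto ε atTop (𝓝[>] 0) := tendsto_nhdsWithin_iff.2
    ⟨tendsto_one_div_add_atTop_nhds_zero_nat, Eventually.of_forall hε⟩
  refine hφ.comp_of_tendsto hp hp'
    (F := fun k t => a * smoothPosPart (ε k) t + b * smoothPosPart (ε k) (-t) + m * t)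
    (D := fun k t => a * smoothPosPartDeriv (ε k) t - b * smoothPosPartDeriv (ε k) (-t) + m)
    (F₀ := fun t => a * max t 0 + b * max (-t) 0 + m * t)
    (D₀ := fun t => a * (if 0 < t then 1 else 0) - b * (if t < 0 then 1 else 0) + m)
    (L := |a| + |b| + |m|) (c := fun k => (|a| + |b|) * ε k) (fun k t => ?_) (fun k => ?_)
    (fun k t => ?_) (fun k t => ?_) ?_ (fun t => ?_)
  · have h₁ := (hasDerivAt_smoothPosPart (hε k) t).const_mul a
    have h₂ := ((hasDerivAt_smoothPosPart (hε k) (-t)).comp t (hasDerivAt_neg t)).const_mul b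
    exact ((h₁.fun_add h₂).fun_add ((hasDerivAt_id' t).const_mul m)).congr_deriv (by ring)
  · have := continuous_smoothPosPartDeriv (hε k)
    fun_prop
  · have h₁ := abs_smoothPosPartDeriv_le_one (hε k) t
    have h₂ := abs_smoothPosPartDeriv_le_one (hε k) (-t)
    calc _ ≤ |a * smoothPosPartDeriv (ε k) t| + |-(b * smoothPosPartDeriv (ε k) (-t))| + |m| := by
          simpa only [sub_eq_add_neg] using abs_add_three _ _ m
      _ ≤ |a| + |b| + |m| := by
          rw [abs_neg, abs_mul, abs_mul]
          gcongr
          · exact mul_le_of_le_one_right (abs_nonneg a) h₁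
          · exact mul_le_of_le_one_right (abs_nonneg b) h₂
  · have h₁ := abs_smoothPosPart_sub_le (hε k) t
    have h₂ := abs_smoothPosPart_sub_le (hε k) (-t)
    calc _ = |a * (smoothPosPart (ε k) t - max t 0) +
          b * (smoothPosPart (ε k) (-t) - max (-t) 0)| := by ring_nf
      _ ≤ |a| * ε k + |b| * ε k := by
          refine (abs_add_le _ _).trans ?_
          rw [abs_mul, abs_mul]
          gcongr
      _ = (|a| + |b|) * ε k := by ring
  · simpa using (tendsto_nhdsWithin_iff.1 hε0).1.const_mul (|a| + |b|)
  · have h₁ := (tendsto_smoothPosPartDeriv t).comp hε0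
    have h₂ := (tendsto_smoothPosPartDeriv (-t)).comp hε0
    simp only [neg_pos] at h₂
    exact ((h₁.const_mul a).sub (h₂.const_mul b)).add_const m

end IsSobolevPair

end Sobolev

/-- Positive part, negative part and absolute value of a Sobolev function are Sobolev, with
`M_p(φ₊)=1_{φ>0}M_pφ`, `M_p(φ₋)=-1_{φ<0}M_pφ`, `M_p(|φ|)=sign(φ)M_pφ`; in particular
`M_pφ` vanishes ν-a.e. on every level set `φ⁻¹(c)`. -/
theorem stmt7 (R : X →L[ℝ] X) (ν : Measure X) [IsProbabilityMeasure ν]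
    (p : ℝ≥0∞) (hp : 1 < p) (hp' : p ≠ ∞)
    (hclos : ∀ G : X → X, IsSobolevPair R ν p (fun _ => 0) G → G =ᵐ[ν] fun _ => 0)
    (φ : X → ℝ) (G : X → X) (hφ : IsSobolevPair R ν p φ G) :
    IsSobolevPair R ν p (fun x => max (φ x) 0) (fun x => if 0 < φ x then G x else 0) ∧
    IsSobolevPair R ν p (fun x => max (-φ x) 0) (fun x => if φ x < 0 then -G x else 0) ∧
    IsSobolevPair R ν p (fun x => |φ x|) (fun x => Real.sign (φ x) • G x) ∧
    ∀ c : ℝ, ∀ᵐ x ∂ν, φ x = c → G x = 0 := by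
  refine ⟨(hφ.comp_piecewiseLinear hp.le hp' 1 0 0).congr (fun x => by simp) (fun x => ?_),
    (hφ.comp_piecewiseLinear hp.le hp' 0 1 0).congr (fun x => by simp) (fun x => ?_),
    (hφ.comp_piecewiseLinear hp.le hp' 1 1 0).congr (fun x => ?_) (fun x => ?_), fun c => ?_⟩
  · split_ifs <;> simp
  · split_ifs <;> simp
  · simp [abs_eq_max_neg]
  · rcases lt_trichotomy (φ x) 0 with h | h | h <;>
      simp [h, lt_asymm, Real.sign_of_neg, Real.sign_of_pos]
  · have hshift : IsSobolevPair R ν p (fun x => φ x - c) (fun x => (1 : ℝ) • G x) :=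
      hφ.comp hp.le hp' (fun t => (hasDerivAt_id t).sub_const c) continuous_const
        (L := 1) (fun _ => by simp)
    have hzero := (hshift.comp_piecewiseLinear hp.le hp' 1 (-1) (-1)).congr
      (φ' := fun _ => 0) (G' := fun x => if φ x = c then -G x else 0) (fun x => ?_) (fun x => ?_)
    · filter_upwards [hclos _ hzero] with x hx hxc
      simpa [hxc] using hx
    · linarith [max_zero_sub_max_neg_zero_eq_self (φ x - c)]
    · rcases lt_trichotomy (φ x) c with h | h | h
      · simp [h, h.ne, lt_asymm h]
      · simp [h]
      · simp [h, h.ne', lt_asymm h]
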